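/- Assume h : {1,…,n} → ℝ is nonnegative and nondecreasing. Let 1 ≤ t ≤ n−1 and let τ ∈ T_t. Then for every φ ∈ ℝ, f_τ^{t+1}(φ) ≥ (inf over φ' ∈ ℝ of f_τ^t(φ')) + (y_{t+1} − φ)²/σ², where τ is viewed as an element of T_{t+1}. -/

import Mathlib

open Finset

/-- Segment cost `C(s,t,φ,ψ)`: cost of fitting data `y_{s+1:t}` with a linear
function taking value `φ` at time `s` and value `ψ` at time `t`. -/
noncomputable def segCost (y : ℕ → ℝ) (σ : ℝ) (s t : ℕ) (φ ψ : ℝ) : ℝ :=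
  (1 / σ ^ 2) * ∑ j ∈ Finset.Icc (s + 1) t,
    (y j - φ - ((ψ - φ) / ((t : ℝ) - (s : ℝ))) * ((j : ℝ) - (s : ℝ))) ^ 2

/-- `ValidCP t τ` : `τ` is a (possibly empty) strictly increasing vector of
changepoints `0 < τ₁ < ⋯ < τ_k < t`, i.e. an element of `T_t`. -/
def ValidCP (t : ℕ) (τ : List ℕ) : Prop :=
  τ.Chain' (· < ·) ∧ ∀ x ∈ τ, 0 < x ∧ x < t

/-- Penalised cost of segmenting `y_{1:t}` with changepoints `τ = (τ₁,…,τ_k)`,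
fitted values `φs 0, …, φs k` at times `0, τ₁, …, τ_k`, and fitted value `φ` at time `t`. -/
noncomputable def segTotal (y : ℕ → ℝ) (σ β : ℝ) (h : ℕ → ℝ) (t : ℕ)
    (τ : List ℕ) (φs : ℕ → ℝ) (φ : ℝ) : ℝ :=
  let p : ℕ → ℕ := fun i => (0 :: τ).getD i 0
  (∑ i ∈ Finset.range τ.length,
      (segCost y σ (p i) (p (i + 1)) (φs i) (φs (i + 1)) + h (p (i + 1) - p i)))
    + segCost y σ (p τ.length) t (φs τ.length) φ + h (t - p τ.length)
    + β * ((τ.length : ℝ) + 1)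

/-- `f_τ^t(φ)` : minimum penalised cost of segmenting `y_{1:t}` with changepoints `τ`
and fitted value `φ` at time `t`, minimised over the fitted values at the changepoints. -/
noncomputable def fseg (y : ℕ → ℝ) (σ β : ℝ) (h : ℕ → ℝ) (t : ℕ)
    (τ : List ℕ) (φ : ℝ) : ℝ :=
  ⨅ φs : ℕ → ℝ, segTotal y σ β h t τ φs φ

/-- `f^t(φ)` : minimum penalised cost of segmenting `y_{1:t}` with fitted value `φ`
at time `t`, minimised over all changepoint vectors in `T_t`; `f^0 ≡ 0`. -/
noncomputable def fDP (y : ℕ → ℝ) (σ β : ℝ) (h : ℕ → ℝ) (t : ℕ) (φ : ℝ) : ℝ :=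
  if t = 0 then 0 else ⨅ τ : {τ : List ℕ // ValidCP t τ}, fseg y σ β h t τ.1 φ


open Finset

/-
Fix the fitted values `φs` at `0, τ₁, …, τ_k` and let `s = τ_k`. The last segment of the
`(t+1)`-problem, a line from `(s, a)` to `(t+1, φ)`, passes at time `t` through the point
`ψ` of linear interpolation; restricted to `(s, t]` it is exactly the last segment of a
`t`-problem ending at `ψ`, and the point `t+1` contributes `(y_{t+1} - φ)²/σ²`. The only other
difference is the penalty `h (t+1-s) ≥ h (t-s)`. Minimising over `φs` gives the claim.
-/

/-- The paper's `τ_k`, with `τ_0 = 0`. -/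
def lastCP (τ : List ℕ) : ℕ := (0 :: τ).getD τ.length 0

lemma ValidCP.lastCP_lt {t : ℕ} {τ : List ℕ} (hτ : ValidCP t τ) (ht : 0 < t) :
    lastCP τ < t := by
  unfold lastCP
  rcases τ.eq_nil_or_concat with rfl | ⟨L, b, rfl⟩
  · simpa using ht
  · simpa using (hτ.2 b (by simp)).2

lemma segCost_nonneg (y : ℕ → ℝ) (σ : ℝ) (s t : ℕ) (φ ψ : ℝ) :
    0 ≤ segCost y σ s t φ ψ := by
  unfold segCost
  positivity

lemma segCost_succ (y : ℕ → ℝ) (σ : ℝ) {s t : ℕ} (hst : s < t) (a φ : ℝ) :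
    segCost y σ s (t + 1) a φ =
      segCost y σ s t a (a + (φ - a) / ((t : ℝ) + 1 - s) * ((t : ℝ) - s))
        + (y (t + 1) - φ) ^ 2 / σ ^ 2 := by
  have hst' : (s : ℝ) < t := by exact_mod_cast hst
  have hts : (t : ℝ) - s ≠ 0 := by linarith
  have ht1s : (t : ℝ) + 1 - s ≠ 0 := by linarith
  have slope : (a + (φ - a) / ((t : ℝ) + 1 - s) * ((t : ℝ) - s) - a) / ((t : ℝ) - s)
      = (φ - a) / ((t : ℝ) + 1 - s) := by
    field_simp
    ring
  have endpoint : y (t + 1) - a - (φ - a) / ((t : ℝ) + 1 - s) * ((t : ℝ) + 1 - s)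
      = y (t + 1) - φ := by
    field_simp
    ring
  unfold segCost
  rw [Finset.sum_Icc_succ_top (by omega)]
  push_cast
  rw [slope, endpoint]
  ring

lemma segTotal_succ (y : ℕ → ℝ) (σ β : ℝ) (h : ℕ → ℝ) {t : ℕ} {τ : List ℕ}
    (hs : lastCP τ < t) (φs : ℕ → ℝ) (φ : ℝ) :
    segTotal y σ β h (t + 1) τ φs φ =
      segTotal y σ β h t τ φs (φs τ.length + (φ - φs τ.length) /
          ((t : ℝ) + 1 - lastCP τ) * ((t : ℝ) - lastCP τ))
        + (y (t + 1) - φ) ^ 2 / σ ^ 2 + (h (t + 1 - lastCP τ) - h (t - lastCP τ)) := by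
  unfold segTotal
  dsimp only
  rw [show (0 :: τ).getD τ.length 0 = lastCP τ from rfl, segCost_succ y σ hs]
  ring

lemma exists_le_segTotal (y : ℕ → ℝ) (σ β : ℝ) (h : ℕ → ℝ) (t : ℕ) (τ : List ℕ) :
    ∃ c, ∀ φs φ, c ≤ segTotal y σ β h t τ φs φ := by
  refine ⟨(∑ i ∈ range τ.length, h ((0 :: τ).getD (i + 1) 0 - (0 :: τ).getD i 0))
    + h (t - lastCP τ) + β * ((τ.length : ℝ) + 1), fun φs φ => ?_⟩
  unfold segTotal
  have hsum := Finset.sum_le_sum fun i (_ : i ∈ range τ.length) =>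
    le_add_of_nonneg_left (a := h ((0 :: τ).getD (i + 1) 0 - (0 :: τ).getD i 0))
      (segCost_nonneg y σ ((0 :: τ).getD i 0) ((0 :: τ).getD (i + 1) 0) (φs i) (φs (i + 1)))
  have hlast := segCost_nonneg y σ (lastCP τ) t (φs τ.length) φ
  simp only [lastCP] at hlast ⊢
  linarith

lemma fseg_le_segTotal (y : ℕ → ℝ) (σ β : ℝ) (h : ℕ → ℝ) (t : ℕ) (τ : List ℕ)
    (φs : ℕ → ℝ) (φ : ℝ) : fseg y σ β h t τ φ ≤ segTotal y σ β h t τ φs φ := by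
  obtain ⟨c, hc⟩ := exists_le_segTotal y σ β h t τ
  exact ciInf_le ⟨c, by rintro _ ⟨φs', rfl⟩; exact hc φs' φ⟩ φs

lemma bddBelow_range_fseg (y : ℕ → ℝ) (σ β : ℝ) (h : ℕ → ℝ) (t : ℕ) (τ : List ℕ) :
    BddBelow (Set.range (fseg y σ β h t τ)) := by
  obtain ⟨c, hc⟩ := exists_le_segTotal y σ β h t τ
  exact ⟨c, by rintro _ ⟨φ, rfl⟩; exact le_ciInf fun φs => hc φs φ⟩

theorem statement12_general (n : ℕ) (y : ℕ → ℝ) (σ : ℝ)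
    (β : ℝ) (h : ℕ → ℝ)
    (hmono : ∀ i j, 1 ≤ i → i ≤ j → j ≤ n → h i ≤ h j)
    (t : ℕ) (ht1 : 1 ≤ t) (htn : t + 1 ≤ n)
    (τ : List ℕ) (hτ : ValidCP t τ) (φ : ℝ) :
    fseg y σ β h (t + 1) τ φ ≥
      (⨅ φ' : ℝ, fseg y σ β h t τ φ') + (y (t + 1) - φ) ^ 2 / σ ^ 2 := by
  have hs : lastCP τ < t := hτ.lastCP_lt ht1
  have hpenalty : h (t - lastCP τ) ≤ h (t + 1 - lastCP τ) :=
    hmono _ _ (by omega) (by omega) (by omega)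
  refine le_ciInf fun φs => ?_
  rw [segTotal_succ y σ β h hs]
  have hinf := (ciInf_le (bddBelow_range_fseg y σ β h t τ) _).trans
    (fseg_le_segTotal y σ β h t τ φs (φs τ.length + (φ - φs τ.length) /
      ((t : ℝ) + 1 - lastCP τ) * ((t : ℝ) - lastCP τ)))
  linarith

/-- for nonnegative nondecreasing `h` and `τ ∈ T_t` with `t + 1 ≤ n`,
`f_τ^{t+1}(φ) ≥ (inf_{φ'} f_τ^t(φ')) + (y_{t+1} - φ)²/σ²`. -/
theorem statement12 (n : ℕ) (hn : 1 ≤ n) (y : ℕ → ℝ) (σ : ℝ) (hσ : 0 < σ)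
    (β : ℝ) (hβ : 0 < β) (h : ℕ → ℝ)
    (hpos : ∀ i, 1 ≤ i → i ≤ n → 0 ≤ h i)
    (hmono : ∀ i j, 1 ≤ i → i ≤ j → j ≤ n → h i ≤ h j)
    (t : ℕ) (ht1 : 1 ≤ t) (htn : t + 1 ≤ n)
    (τ : List ℕ) (hτ : ValidCP t τ) (φ : ℝ) :
    fseg y σ β h (t + 1) τ φ ≥
      (⨅ φ' : ℝ, fseg y σ β h t τ φ') + (y (t + 1) - φ) ^ 2 / σ ^ 2 :=
  statement12_general n y σ β h hmono t ht1 htn τ hτ φ
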